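/- arXiv:1704.02251 — 8 statements merged into one kernel-verified Lean document; each statement's English description precedes it below -/
import Mathlib

section
/- Let 0 < r < 1 and let α : ℕ → ℝ be a strictly increasing sequence with α_n → ∞. Define w(n) := r^{α_n} for n ≥ 1. Then w is strictly decreasing and w(n) → 0 as n → ∞. Moreover, the sequence (n^k · r^{α_n})_{n≥1} is bounded for every k ∈ ℕ if and only if lim_{n→∞} (log n)/α_n = 0. -/
/-!
Since `(n + 1) ^ k * r ^ a n = exp (k * log (n + 1) + log r * a n)` with `log r < 0`, everything
happens on the logarithmic scale. A bound `k * log (n + 1) + log r * a n ≤ log M` gives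
`log (n + 1) / a n ≤ (log M / a n - log r) / k`, whose limit `-log r / k` is arbitrarily small
once `k` is large. Conversely, if `log (n + 1) / a n → 0` then the exponent is
`a n * (k * (log (n + 1) / a n) + log r) → -∞`, so the sequence tends to `0` and is bounded.
-/

open Filter Topology Real

noncomputable section

section LogScale

variable {ι : Type*} {l : Filter ι} {L a : ι → ℝ} {c : ℝ}

theorem tendsto_div_nhds_zero_of_forall_eventually_le (hc : c < 0) (ha : Tendsto a l atTop)
    (hL : ∀ᶠ i in l, 0 ≤ L i) (hbound : ∀ k : ℕ, ∃ M, ∀ᶠ i in l, k * L i + c * a i ≤ M) :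
    Tendsto (fun i => L i / a i) l (𝓝 0) := by
  refine tendsto_order.2 ⟨fun b hb => ?_, fun b hb => ?_⟩
  · filter_upwards [hL, ha.eventually_gt_atTop 0] with i hLi hai
    exact hb.trans_le (div_nonneg hLi hai.le)
  · obtain ⟨k, hk⟩ := exists_nat_gt (-c / b)
    have hk0 : (0 : ℝ) < k := (div_pos (neg_pos.2 hc) hb).trans hk
    obtain ⟨M, hM⟩ := hbound k
    have hlim : Tendsto (fun i => (M / a i - c) / k) l (𝓝 ((0 - c) / k)) :=
      ((tendsto_const_nhds.div_atTop ha).sub_const c).div_const _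
    have hck : (0 - c) / k < b := by
      rw [zero_sub, div_lt_iff₀ hk0]
      rw [div_lt_iff₀ hb] at hk
      linarith
    filter_upwards [hM, ha.eventually_gt_atTop 0, hlim.eventually_lt_const hck]
      with i hMi hai hlt
    refine lt_of_le_of_lt ?_ hlt
    rw [div_sub' hai.ne', div_div, div_le_div_iff₀ hai (mul_pos hai hk0)]
    nlinarith

theorem tendsto_mul_add_mul_atBot_of_div_tendsto_zero (hc : c < 0) (ha : Tendsto a l atTop)
    (hdiv : Tendsto (fun i => L i / a i) l (𝓝 0)) (k : ℝ) :
    Tendsto (fun i => k * L i + c * a i) l atBot := by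
  have hfactor : Tendsto (fun i => k * (L i / a i) + c) l (𝓝 c) := by
    simpa using (hdiv.const_mul k).add_const c
  refine (ha.atTop_mul_neg hc hfactor).congr' ?_
  filter_upwards [ha.eventually_ne_atTop 0] with i hai
  field_simp

end LogScale

theorem pow_mul_rpow_eq_exp {b r : ℝ} (hb : 0 < b) (hr : 0 < r) (k : ℕ) (x : ℝ) :
    b ^ k * r ^ x = exp (k * log b + log r * x) := by
  rw [exp_add, ← log_pow, exp_log (pow_pos hb k), rpow_def_of_pos hr]

/-- for `0 < r < 1` and `α` strictly increasing with `α_n → ∞`, the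
sequence `w(n) = r^{α_n}` is strictly decreasing and tends to `0`; moreover
`(n^k r^{α_n})_n` is bounded for every `k ∈ ℕ` iff `(log n)/α_n → 0`.
(Indices are shifted: `n : Nat` represents `n+1`.) -/
theorem stmt0 (r : ℝ) (hr0 : 0 < r) (hr1 : r < 1) (a : ℕ → ℝ)
    (hmono : StrictMono a) (htop : Tendsto a atTop atTop) :
    StrictAnti (fun n : ℕ => r ^ (a n)) ∧
    Tendsto (fun n : ℕ => r ^ (a n)) atTop (𝓝 0) ∧
    ((∀ k : ℕ, ∃ M : ℝ, ∀ n : ℕ, ((n : ℝ) + 1) ^ k * r ^ (a n) ≤ M) ↔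
      Tendsto (fun n : ℕ => Real.log ((n : ℝ) + 1) / a n) atTop (𝓝 0)) := by
  have hlogr : log r < 0 := log_neg hr0 hr1
  have hexp (k n : ℕ) : ((n : ℝ) + 1) ^ k * r ^ a n = exp (k * log (n + 1) + log r * a n) :=
    pow_mul_rpow_eq_exp n.cast_add_one_pos hr0 k (a n)
  refine ⟨fun m n hmn => rpow_lt_rpow_of_exponent_gt hr0 hr1 (hmono hmn),
    (tendsto_rpow_atTop_of_base_lt_one r (by linarith) hr1).comp htop, ⟨fun hbdd => ?_, ?_⟩⟩
  · refine tendsto_div_nhds_zero_of_forall_eventually_le hlogr htop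
      (.of_forall fun n => log_nonneg (by simp)) fun k => ?_
    obtain ⟨M, hM⟩ := hbdd k
    have hM0 : 0 < M := (by positivity : (0 : ℝ) < _).trans_le (hM 0)
    exact ⟨log M, .of_forall fun n => (le_log_iff_exp_le hM0).2 (hexp k n ▸ hM n)⟩
  · intro hdiv k
    have hzero := tendsto_exp_atBot.comp
      (tendsto_mul_add_mul_atBot_of_div_tendsto_zero hlogr htop hdiv k)
    obtain ⟨M, hM⟩ := hzero.bddAbove_range
    exact ⟨M, fun n => hexp k n ▸ hM ⟨n, rfl⟩⟩
end
end

section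
/- The Cesàro operator C maps Λ₀(α) into Λ₀(α), is continuous, and satisfies p_k(Cx) ≤ p_k(x) for every x ∈ Λ₀(α) and every k ≥ 1. -/
open Filter Finset Topology

noncomputable section

/-- The weight `w_k(n) = e^{-alpha_n / k}`.  Indices are shifted by one: the natural
numbers `k n : Nat` represent the indices `k+1` and `n+1` (both running from `1`). -/
def wt (a : ℕ → ℝ) (k n : ℕ) : ℝ := Real.exp (-(a n) / ((k : ℝ) + 1))

/-- Membership in the power series space of finite type `Λ₀(α)`:
`x ∈ Λ₀(α)` iff `w_k(n)|x_n| → 0` for every `k ≥ 1`. -/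
def memLambda (a : ℕ → ℝ) (x : ℕ → ℂ) : Prop :=
  ∀ k : ℕ, Tendsto (fun n => wt a k n * ‖x n‖) atTop (𝓝 0)

/-- The norm `p_k(x) = sup_n w_k(n)|x_n|` generating the Fréchet topology of `Λ₀(α)`. -/
def pk (a : ℕ → ℝ) (k : ℕ) (x : ℕ → ℂ) : ℝ := ⨆ n : ℕ, wt a k n * ‖x n‖

/-- The discrete Cesàro operator `(C x)_n = (x_1 + ⋯ + x_n)/n` (0-indexed). -/
def cesaro (x : ℕ → ℂ) : ℕ → ℂ := fun n => (∑ i ∈ Finset.range (n + 1), x i) / ((n : ℂ) + 1)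

/-! Each weight `w_k` is nonnegative and decreasing, so
`w_k(n) |(Cx)_n| ≤ (w_k(1)|x_1| + ⋯ + w_k(n)|x_n|) / n`, i.e. the weighted sequence of `Cx`
is dominated by the Cesàro means of the weighted sequence of `x`. Cesàro means of a null
sequence are null, and they never exceed the supremum. -/

lemma wt_nonneg (a : ℕ → ℝ) (k n : ℕ) : 0 ≤ wt a k n := (Real.exp_pos _).le

lemma wt_antitone {a : ℕ → ℝ} (ha : Monotone a) (k : ℕ) : Antitone (wt a k) := fun i n hin =>
  Real.exp_le_exp.2 <| div_le_div_of_nonneg_right (neg_le_neg (ha hin)) (by positivity)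

lemma norm_cesaro (x : ℕ → ℂ) (n : ℕ) :
    ‖cesaro x n‖ = ‖∑ i ∈ range (n + 1), x i‖ / ((n : ℝ) + 1) := by
  rw [cesaro, norm_div]
  congr 1
  exact_mod_cast Complex.norm_natCast (n + 1)

section Weighted

variable {w : ℕ → ℝ} (hw : Antitone w) (hw0 : ∀ n, 0 ≤ w n) {x : ℕ → ℂ}
include hw hw0

lemma mul_norm_cesaro_le (n : ℕ) :
    w n * ‖cesaro x n‖ ≤ (∑ i ∈ range (n + 1), w i * ‖x i‖) / ((n : ℝ) + 1) := by
  rw [norm_cesaro, ← mul_div_assoc]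
  gcongr
  calc w n * ‖∑ i ∈ range (n + 1), x i‖
      ≤ ∑ i ∈ range (n + 1), w n * ‖x i‖ := by
        rw [← mul_sum]; exact mul_le_mul_of_nonneg_left (norm_sum_le _ _) (hw0 n)
    _ ≤ ∑ i ∈ range (n + 1), w i * ‖x i‖ := by
        gcongr with i hi
        exact hw (Nat.lt_succ_iff.mp (mem_range.mp hi))

lemma tendsto_mul_norm_cesaro_zero (hx : Tendsto (fun n => w n * ‖x n‖) atTop (𝓝 0)) :
    Tendsto (fun n => w n * ‖cesaro x n‖) atTop (𝓝 0) := by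
  have hmeans : Tendsto (fun n : ℕ => (∑ i ∈ range (n + 1), w i * ‖x i‖) / ((n : ℝ) + 1))
      atTop (𝓝 0) := by
    refine (hx.cesaro.comp (tendsto_add_atTop_nat 1)).congr fun n => ?_
    simp [div_eq_inv_mul]
  exact squeeze_zero (fun n => mul_nonneg (hw0 n) (norm_nonneg _))
    (mul_norm_cesaro_le hw hw0) hmeans

lemma iSup_mul_norm_cesaro_le (hx : BddAbove (Set.range fun n => w n * ‖x n‖)) :
    ⨆ n, w n * ‖cesaro x n‖ ≤ ⨆ n, w n * ‖x n‖ := by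
  refine ciSup_le fun n => (mul_norm_cesaro_le hw hw0 n).trans ?_
  rw [div_le_iff₀ (by positivity)]
  calc ∑ i ∈ range (n + 1), w i * ‖x i‖
      ≤ ∑ _i ∈ range (n + 1), ⨆ m, w m * ‖x m‖ := sum_le_sum fun i _ => le_ciSup hx i
    _ = (⨆ m, w m * ‖x m‖) * ((n : ℝ) + 1) := by simp [mul_comm]

end Weighted

theorem stmt1_general (a : ℕ → ℝ) (hmono : StrictMono a) :
    ∀ x : ℕ → ℂ, memLambda a x →
      memLambda a (cesaro x) ∧ ∀ k : ℕ, pk a k (cesaro x) ≤ pk a k x := fun _ hx =>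
  ⟨fun k => tendsto_mul_norm_cesaro_zero (wt_antitone hmono.monotone k) (wt_nonneg a k) (hx k),
    fun k => iSup_mul_norm_cesaro_le (wt_antitone hmono.monotone k) (wt_nonneg a k)
      (hx k).bddAbove_range⟩

/-- the Cesàro operator maps `Λ₀(α)` into itself and is continuous,
satisfying `p_k(Cx) ≤ p_k(x)` for every `x ∈ Λ₀(α)` and every `k`. -/
theorem stmt1 (a : ℕ → ℝ) (hmono : StrictMono a) (h1 : ∀ n, 1 < a n)
    (htop : Tendsto a atTop atTop) :
    ∀ x : ℕ → ℂ, memLambda a x →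
      memLambda a (cesaro x) ∧ ∀ k : ℕ, pk a k (cesaro x) ≤ pk a k x :=
  stmt1_general a hmono
end
end

section
/- Fix 0 < β < 1 and define α_n := Σ_{j=1}^n j^{-β} for n ≥ 1. Then α is strictly increasing with α_n → ∞, lim_{n→∞} (log n)/α_n = 0, and for every 0 < r < 1 one has lim_{n→∞} (r^{α_n}/n) · Σ_{m=1}^n r^{-α_m} = 0. -/
open Filter Finset Topology

noncomputable section

/-! Every summand of `α_n` is at least `n^{-β}`, so `α_n ≥ n^{1-β}`; this gives `α_n → ∞` and
`(log n)/α_n → 0`. More precisely `α_n - α_m ≥ (n - m) n^{-β}`, so the weights `r^{α_n - α_m}`,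
`m ≤ n`, are dominated by a geometric series of ratio `r^{n^{-β}}`, whose sum is at most
`n^β/(1 - r)` by Bernoulli's inequality `1 - r^δ ≥ δ (1 - r)`. Dividing by `n` leaves
`n^{β-1}/(1 - r) → 0`. -/

/-- Index `n` stands for the paper's `n + 1`. -/
def harmonicRpow (b : ℝ) (n : ℕ) : ℝ := ∑ j ∈ range (n + 1), ((j : ℝ) + 1) ^ (-b)

lemma Real.mul_one_sub_le_one_sub_rpow {r δ : ℝ} (hr : 0 ≤ r) (hδ0 : 0 ≤ δ) (hδ1 : δ ≤ 1) :
    δ * (1 - r) ≤ 1 - r ^ δ := by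
  have := rpow_one_add_le_one_add_mul_self (s := r - 1) (by linarith) hδ0 hδ1
  rw [add_sub_cancel] at this
  linarith

lemma sum_pow_sub_le_inv_one_sub {x : ℝ} (hx0 : 0 ≤ x) (hx1 : x < 1) (n : ℕ) :
    ∑ m ∈ range (n + 1), x ^ (n - m) ≤ (1 - x)⁻¹ := by
  have := sum_range_reflect (fun m => x ^ m) (n + 1)
  simp only [add_tsub_cancel_right] at this
  rw [this, ← Nat.Ico_zero_eq_range]
  simpa only [pow_zero, one_div] using geom_sum_Ico_le_of_lt_one hx0 hx1 (m := 0) (n := n + 1)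

lemma sum_rpow_sub_le_of_mul_le_sub {a : ℕ → ℝ} {r δ : ℝ} {n : ℕ} (hr0 : 0 < r) (hr1 : r < 1)
    (hδ0 : 0 < δ) (hδ1 : δ ≤ 1) (hgap : ∀ m ≤ n, ((n - m : ℕ) : ℝ) * δ ≤ a n - a m) :
    ∑ m ∈ range (n + 1), r ^ (a n - a m) ≤ (δ * (1 - r))⁻¹ := by
  have hterm : ∀ m ∈ range (n + 1), r ^ (a n - a m) ≤ (r ^ δ) ^ (n - m) := fun m hm => by
    rw [← Real.rpow_natCast, ← Real.rpow_mul hr0.le, mul_comm]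
    exact Real.rpow_le_rpow_of_exponent_ge hr0 hr1.le (hgap m (by simpa [Nat.lt_succ_iff] using hm))
  calc ∑ m ∈ range (n + 1), r ^ (a n - a m)
      ≤ ∑ m ∈ range (n + 1), (r ^ δ) ^ (n - m) := sum_le_sum hterm
    _ ≤ (1 - r ^ δ)⁻¹ :=
        sum_pow_sub_le_inv_one_sub (by positivity) (Real.rpow_lt_one hr0.le hr1 hδ0) n
    _ ≤ (δ * (1 - r))⁻¹ := inv_anti₀ (by nlinarith)
        (Real.mul_one_sub_le_one_sub_rpow hr0.le hδ0.le hδ1)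

lemma tendsto_natCast_add_one_rpow_atTop {s : ℝ} (hs : 0 < s) :
    Tendsto (fun n : ℕ => ((n : ℝ) + 1) ^ s) atTop atTop :=
  (tendsto_rpow_atTop hs).comp (tendsto_atTop_add_const_right atTop 1 tendsto_natCast_atTop_atTop)

namespace harmonicRpow

variable {b : ℝ}

lemma strictMono (b : ℝ) : StrictMono (harmonicRpow b) :=
  strictMono_nat_of_lt_succ fun n => by
    rw [harmonicRpow, harmonicRpow, sum_range_succ _ (n + 1)]
    exact lt_add_of_pos_right _ (by positivity)

lemma card_mul_le_sum_Ico (hb : 0 ≤ b) {m n : ℕ} :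
    ((n + 1 - m : ℕ) : ℝ) * ((n : ℝ) + 1) ^ (-b) ≤ ∑ j ∈ Ico m (n + 1), ((j : ℝ) + 1) ^ (-b) := by
  rw [← Nat.card_Ico, ← nsmul_eq_mul]
  refine card_nsmul_le_sum _ _ _ fun j hj => ?_
  have hjn : (j : ℝ) ≤ n := by exact_mod_cast Nat.lt_succ_iff.mp (mem_Ico.mp hj).2
  exact Real.rpow_le_rpow_of_nonpos (by positivity) (by linarith) (by linarith)

lemma rpow_one_sub_le (hb : 0 ≤ b) (n : ℕ) : ((n : ℝ) + 1) ^ (1 - b) ≤ harmonicRpow b n := by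
  have h := card_mul_le_sum_Ico hb (m := 0) (n := n)
  rw [Nat.Ico_zero_eq_range, Nat.sub_zero, Nat.cast_add_one] at h
  rwa [sub_eq_add_neg, Real.rpow_add (by positivity), Real.rpow_one]

lemma pos (hb : 0 ≤ b) (n : ℕ) : 0 < harmonicRpow b n :=
  (Real.rpow_pos_of_pos (by positivity) _).trans_le (rpow_one_sub_le hb n)

lemma mul_le_sub (hb : 0 ≤ b) {m n : ℕ} (hmn : m ≤ n) :
    ((n - m : ℕ) : ℝ) * ((n : ℝ) + 1) ^ (-b) ≤ harmonicRpow b n - harmonicRpow b m := by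
  rw [harmonicRpow, harmonicRpow, ← sum_Ico_eq_sub _ (by omega), show n - m = n + 1 - (m + 1) by omega]
  exact card_mul_le_sum_Ico hb

lemma tendsto_atTop (hb0 : 0 ≤ b) (hb1 : b < 1) : Tendsto (harmonicRpow b) atTop atTop :=
  tendsto_atTop_mono (rpow_one_sub_le hb0) (tendsto_natCast_add_one_rpow_atTop (by linarith))

lemma tendsto_log_div (hb0 : 0 ≤ b) (hb1 : b < 1) :
    Tendsto (fun n : ℕ => Real.log ((n : ℝ) + 1) / harmonicRpow b n) atTop (𝓝 0) := by
  have hlog : Tendsto (fun n : ℕ => Real.log ((n : ℝ) + 1) / ((n : ℝ) + 1) ^ (1 - b)) atTop (𝓝 0) :=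
    (isLittleO_log_rpow_atTop (by linarith)).tendsto_div_nhds_zero.comp
      (tendsto_atTop_add_const_right atTop 1 tendsto_natCast_atTop_atTop)
  have hlog_nonneg (n : ℕ) : 0 ≤ Real.log ((n : ℝ) + 1) := Real.log_nonneg (by simp)
  refine squeeze_zero (fun n => div_nonneg (hlog_nonneg n) (pos hb0 n).le) (fun n => ?_) hlog
  exact div_le_div_of_nonneg_left (hlog_nonneg n) (by positivity) (rpow_one_sub_le hb0 n)

lemma rpow_div_mul_sum_rpow_neg_le (hb : 0 ≤ b) {r : ℝ} (hr0 : 0 < r) (hr1 : r < 1) (n : ℕ) :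
    r ^ harmonicRpow b n / ((n : ℝ) + 1) * ∑ m ∈ range (n + 1), r ^ (-harmonicRpow b m)
      ≤ (((n : ℝ) + 1) ^ (1 - b) * (1 - r))⁻¹ := by
  have hn : (0 : ℝ) < n + 1 := by positivity
  have hsum := sum_rpow_sub_le_of_mul_le_sub (a := harmonicRpow b) hr0 hr1
    (Real.rpow_pos_of_pos hn (-b)) (Real.rpow_le_one_of_one_le_of_nonpos (by simp) (by linarith))
    fun m hmn => mul_le_sub hb hmn
  simp_rw [sub_eq_add_neg, Real.rpow_add hr0, ← mul_sum] at hsum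
  rw [sub_eq_add_neg, Real.rpow_add hn, Real.rpow_one, div_mul_eq_mul_div, div_le_iff₀ hn]
  calc _ ≤ ((n + 1 : ℝ) ^ (-b) * (1 - r))⁻¹ := hsum
    _ = _ := by field_simp

end harmonicRpow

/-- for `0 < β < 1` and `α_n = ∑_{j=1}^n j^{-β}`, the sequence `α` is
strictly increasing with `α_n → ∞`, `(log n)/α_n → 0`, and for every `0 < r < 1` one
has `(r^{α_n}/n) ∑_{m=1}^n r^{-α_m} → 0`.  (Indices shifted: `n : Nat` is `n+1`.) -/
theorem stmt3 (b : ℝ) (hb0 : 0 < b) (hb1 : b < 1) (a : ℕ → ℝ)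
    (ha : ∀ n : ℕ, a n = ∑ j ∈ Finset.range (n + 1), ((j : ℝ) + 1) ^ (-b)) :
    StrictMono a ∧ Tendsto a atTop atTop ∧
    Tendsto (fun n : ℕ => Real.log ((n : ℝ) + 1) / a n) atTop (𝓝 0) ∧
    ∀ r : ℝ, 0 < r → r < 1 →
      Tendsto
        (fun n : ℕ => r ^ (a n) / ((n : ℝ) + 1) * ∑ m ∈ Finset.range (n + 1), r ^ (-(a m)))
        atTop (𝓝 0) := by
  obtain rfl : a = harmonicRpow b := funext ha
  refine ⟨harmonicRpow.strictMono b, harmonicRpow.tendsto_atTop hb0.le hb1,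
    harmonicRpow.tendsto_log_div hb0.le hb1, fun r hr0 hr1 => ?_⟩
  have hbound : Tendsto (fun n : ℕ => (((n : ℝ) + 1) ^ (1 - b) * (1 - r))⁻¹) atTop (𝓝 0) :=
    ((tendsto_natCast_add_one_rpow_atTop (by linarith)).atTop_mul_const (by linarith)).inv_tendsto_atTop
  refine squeeze_zero (fun n => ?_) (harmonicRpow.rpow_div_mul_sum_rpow_neg_le hb0.le hr0 hr1) hbound
  exact mul_nonneg (by positivity) (sum_nonneg fun m _ => by positivity)
end
end

section
/- Let α be strictly increasing with α_n > 1 and α_n → ∞. Then 1 is an eigenvalue of the Cesàro operator C on Λ₀(α), with eigenvector 𝟙 = (1,1,1,…); every eigenvalue of C on Λ₀(α) belongs to Σ = {1/m : m ≥ 1}; and Σ ⊆ σ(C; Λ₀(α)). -/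
open Filter Finset Topology

noncomputable section

/-- `lam` is an eigenvalue of the Cesàro operator on `Λ₀(α)`. -/
def IsEigen (a : ℕ → ℝ) (lam : ℂ) : Prop :=
  ∃ x : ℕ → ℂ, memLambda a x ∧ x ≠ 0 ∧ cesaro x = lam • x

/-- `lam` belongs to the resolvent set of the Cesàro operator on `Λ₀(α)`:
`lam • I - C` has a linear inverse `T` on `Λ₀(α)` which is continuous for the
Fréchet topology generated by the norms `p_k`. -/
def InResolvent (a : ℕ → ℝ) (lam : ℂ) : Prop :=
  ∃ T : (ℕ → ℂ) → (ℕ → ℂ),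
    (∀ x, memLambda a x → memLambda a (T x)) ∧
    (∀ x y, memLambda a x → memLambda a y → T (x + y) = T x + T y) ∧
    (∀ (c : ℂ) (x), memLambda a x → T (c • x) = c • T x) ∧
    (∀ k : ℕ, ∃ l : ℕ, ∃ M : ℝ, 0 < M ∧ ∀ x, memLambda a x → pk a k (T x) ≤ M * pk a l x) ∧
    (∀ x, memLambda a x → T (lam • x - cesaro x) = x) ∧
    (∀ x, memLambda a x → lam • T x - cesaro (T x) = x)

/-- `1` is an eigenvalue of `C` on `Λ₀(α)` with eigenvector `𝟙`;
every eigenvalue of `C` on `Λ₀(α)` lies in `Σ = {1/m : m ≥ 1}`; and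
`Σ ⊆ σ(C; Λ₀(α))`. -/
theorem stmt4 (a : ℕ → ℝ) (hmono : StrictMono a) (h1 : ∀ n, 1 < a n)
    (htop : Tendsto a atTop atTop) :
    (memLambda a (fun _ => (1 : ℂ)) ∧
      cesaro (fun _ => (1 : ℂ)) = (1 : ℂ) • (fun _ => (1 : ℂ))) ∧
    (∀ lam : ℂ, IsEigen a lam → ∃ m : ℕ, lam = 1 / ((m : ℂ) + 1)) ∧
    (∀ m : ℕ, ¬ InResolvent a (1 / ((m : ℂ) + 1))) := by
  classical
  refine ⟨⟨?_, ?_⟩, ?_, ?_⟩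
  · -- 𝟙 ∈ Λ₀(α)
    intro k
    have hk : (0:ℝ) < (k:ℝ) + 1 := by positivity
    have hb : Tendsto (fun n => -(a n) / ((k:ℝ) + 1)) atTop atBot := by
      apply Tendsto.atBot_div_const hk
      exact tendsto_neg_atBot_iff.mpr htop
    exact (Real.tendsto_exp_atBot.comp hb).congr (fun n => by simp [wt, Function.comp])
  · -- C 𝟙 = 𝟙
    funext n
    simp [cesaro, div_self (Nat.cast_add_one_ne_zero n : ((n:ℂ)+1) ≠ 0)]
  · -- eigenvalues lie in Σ
    rintro lam ⟨x, hx, hne, heig⟩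
    have hex : ∃ n, x n ≠ 0 := by
      by_contra h; push_neg at h; exact hne (funext h)
    set m := Nat.find hex with hmdef
    have hm : x m ≠ 0 := Nat.find_spec hex
    have hlt : ∀ i < m, x i = 0 := fun i hi => not_not.mp (Nat.find_min hex hi)
    refine ⟨m, ?_⟩
    have h := congrFun heig m
    simp only [cesaro, Pi.smul_apply, smul_eq_mul] at h
    rw [Finset.sum_range_succ, Finset.sum_eq_zero (fun i hi => hlt i (mem_range.mp hi)),
      zero_add] at h
    have hm1 : ((m:ℂ)+1) ≠ 0 := Nat.cast_add_one_ne_zero m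
    rw [div_eq_iff hm1] at h
    have h3 : (lam * ((m:ℂ)+1)) * x m = 1 * x m := by linear_combination -h
    have h4 := mul_right_cancel₀ hm h3
    rw [eq_div_iff hm1]
    linear_combination h4
  · -- Σ ⊆ σ(C)
    rintro m ⟨T, hTmem, -, -, -, -, hright⟩
    have hymem : memLambda a (fun n => if n = m then 1 else 0) := by
      intro k
      refine Tendsto.congr' ?_ tendsto_const_nhds
      filter_upwards [eventually_gt_atTop m] with n hn
      simp [hn.ne']
    have hx := hright _ hymem
    set x := T (fun n => if n = m then 1 else 0) with hxdef
    have key : ∀ n, n < m → x n = 0 := by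
      intro n
      induction n using Nat.strong_induction_on with
      | _ n ih =>
        intro hn
        have h := congrFun hx n
        simp only [Pi.sub_apply, Pi.smul_apply, smul_eq_mul, cesaro, if_neg hn.ne] at h
        rw [Finset.sum_range_succ, Finset.sum_eq_zero
          (fun i hi => ih i (mem_range.mp hi) ((mem_range.mp hi).trans hn)), zero_add] at h
        have hm1 : ((m:ℂ)+1) ≠ 0 := Nat.cast_add_one_ne_zero m
        have hn1 : ((n:ℂ)+1) ≠ 0 := Nat.cast_add_one_ne_zero n
        have hcoef : (1/((m:ℂ)+1) - 1/((n:ℂ)+1)) ≠ 0 := by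
          intro h0
          rw [sub_eq_zero, div_eq_div_iff hm1 hn1, one_mul, one_mul] at h0
          exact hn.ne (Nat.cast_inj.mp (add_right_cancel h0))
        have hz : (1/((m:ℂ)+1) - 1/((n:ℂ)+1)) * x n = 0 := by
          field_simp at h ⊢
          linear_combination h
        exact (mul_eq_zero.mp hz).resolve_left hcoef
    have h := congrFun hx m
    simp only [Pi.sub_apply, Pi.smul_apply, smul_eq_mul, cesaro, eq_self_iff_true, if_true] at h
    rw [Finset.sum_range_succ, Finset.sum_eq_zero
      (fun i hi => key i (mem_range.mp hi)), zero_add] at h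
    have : (0:ℂ) = 1 := by rw [← h]; ring
    exact zero_ne_one this
end
end

section
/- Let α be strictly increasing with α_n > 1 and α_n → ∞. The following assertions are equivalent: (a) lim_{n→∞} (log n)/α_n = 0; (b) the set of eigenvalues of the Cesàro operator C on Λ₀(α) equals Σ = {1/m : m ≥ 1}; (c) C has an eigenvalue on Λ₀(α) different from 1. -/
/-! An eigenvector `x` of `C` for `lam` satisfies `x_0 + ⋯ + x_n = lam (n + 1) x_n`, so by induction
it vanishes at every index `n` with `lam (n + 1) ≠ 1`. Hence `lam = 1/(m+1)`, and the eigenspace is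
spanned by the binomial sequence `n ↦ (n choose m)`, an eigenvector by the hockey-stick identity.
This sequence is dominated by `(n + 1)^m`, and `Λ₀(α)` is an algebra containing the constants, so
all binomial sequences lie in `Λ₀(α)` as soon as `(n + 1)` does; for `m ≥ 1` it is at least
`(n + 1)/2` for large `n`, so conversely its membership forces that of `(n + 1)`. Finally
`(n + 1) ∈ Λ₀(α)` iff `log (n + 1) - α_n / k → -∞` for every `k`, iff `log n / α_n → 0`. -/

open Filter Finset Topology

noncomputable section

theorem Nat.sum_range_choose_left (n m : ℕ) :
    ∑ i ∈ range (n + 1), i.choose m = (n + 1).choose (m + 1) := by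
  induction n with
  | zero => cases m <;> simp [Nat.choose_eq_zero_of_lt]
  | succ n ih => rw [sum_range_succ, ih, Nat.choose_succ_succ' (n + 1), add_comm]

theorem Nat.sub_add_one_le_choose {n m : ℕ} (hm : 1 ≤ m) (hmn : m ≤ n) :
    n - m + 1 ≤ n.choose m := by
  rw [← Nat.choose_symm hmn, ← Nat.choose_succ_self_right (n - m)]
  exact Nat.choose_le_choose _ (by omega)

theorem cesaro_sub (x y : ℕ → ℂ) : cesaro (x - y) = cesaro x - cesaro y := by
  funext n
  simp only [cesaro, Pi.sub_apply, sum_sub_distrib, sub_div]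

theorem cesaro_smul (c : ℂ) (x : ℕ → ℂ) : cesaro (c • x) = c • cesaro x := by
  funext n
  simp only [cesaro, Pi.smul_apply, smul_eq_mul, ← mul_sum, mul_div_assoc]

theorem sum_range_succ_eq_of_cesaro_eq_smul {lam : ℂ} {x : ℕ → ℂ} (hx : cesaro x = lam • x)
    (n : ℕ) : ∑ i ∈ range (n + 1), x i = lam * ((n : ℂ) + 1) * x n := by
  have h := congrFun hx n
  simp only [cesaro, Pi.smul_apply, smul_eq_mul] at h
  rw [div_eq_iff (Nat.cast_add_one_ne_zero n)] at h
  rw [h]; ring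

theorem eq_zero_of_cesaro_eq_smul {lam : ℂ} {x : ℕ → ℂ} (hx : cesaro x = lam • x)
    (h : ∀ n : ℕ, lam * ((n : ℂ) + 1) = 1 → x n = 0) : x = 0 := by
  funext n
  induction n using Nat.strong_induction_on with
  | _ n ih =>
    have hsum := sum_range_succ_eq_of_cesaro_eq_smul hx n
    rw [sum_range_succ, sum_eq_zero fun i hi => ih i (mem_range.mp hi), zero_add] at hsum
    by_cases hn : lam * ((n : ℂ) + 1) = 1
    · exact h n hn
    · have : x n * (lam * ((n : ℂ) + 1) - 1) = 0 := by linear_combination -hsum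
      exact (mul_eq_zero.mp this).resolve_right (sub_ne_zero.mpr hn)

theorem exists_eq_one_div_of_cesaro_eq_smul {lam : ℂ} {x : ℕ → ℂ} (hx : cesaro x = lam • x)
    (hx0 : x ≠ 0) : ∃ m : ℕ, lam = 1 / ((m : ℂ) + 1) := by
  by_contra! hlam
  refine hx0 (eq_zero_of_cesaro_eq_smul hx fun n hn => absurd ?_ (hlam n))
  exact eq_div_of_mul_eq (Nat.cast_add_one_ne_zero n) hn

def binomSeq (m : ℕ) : ℕ → ℂ := fun n => (n.choose m : ℂ)

theorem binomSeq_ne_zero (m : ℕ) : binomSeq m ≠ 0 := fun h => by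
  simpa [binomSeq] using congrFun h m

theorem cesaro_binomSeq (m : ℕ) : cesaro (binomSeq m) = (1 / ((m : ℂ) + 1)) • binomSeq m := by
  funext n
  have habsorb : ((n : ℂ) + 1) * (n.choose m : ℂ) = ((n + 1).choose (m + 1) : ℂ) * ((m : ℂ) + 1) := by
    exact_mod_cast Nat.add_one_mul_choose_eq n m
  simp only [cesaro, binomSeq, Pi.smul_apply, smul_eq_mul, ← Nat.cast_sum, Nat.sum_range_choose_left]
  field_simp
  linear_combination -habsorb

theorem eq_smul_binomSeq_of_cesaro_eq_smul {m : ℕ} {x : ℕ → ℂ}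
    (hx : cesaro x = (1 / ((m : ℂ) + 1)) • x) : x = x m • binomSeq m := by
  rw [← sub_eq_zero]
  refine eq_zero_of_cesaro_eq_smul (lam := 1 / ((m : ℂ) + 1)) ?_ fun n hn => ?_
  · rw [cesaro_sub, cesaro_smul, cesaro_binomSeq, hx, smul_sub, smul_comm]
  · have hnm : n = m := by
      rw [one_div_mul_eq_div, div_eq_one_iff_eq (Nat.cast_add_one_ne_zero m)] at hn
      exact_mod_cast add_right_cancel hn
    subst hnm
    simp [binomSeq]

section PowerSeriesSpace

variable {a : ℕ → ℝ}

theorem tendsto_wt_atTop (htop : Tendsto a atTop atTop) (k : ℕ) :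
    Tendsto (wt a k) atTop (𝓝 0) :=
  Real.tendsto_exp_atBot.comp
    (Tendsto.atBot_div_const (by positivity) (tendsto_neg_atTop_atBot.comp htop))

theorem wt_eq_sq (k n : ℕ) : wt a k n = wt a (2 * k + 1) n ^ 2 := by
  simp only [wt, ← Real.exp_nat_mul]
  congr 1
  push_cast
  field_simp
  ring

theorem memLambda_of_norm_le {x y : ℕ → ℂ} (hx : memLambda a x) (c : ℝ)
    (h : ∀ᶠ n in atTop, ‖y n‖ ≤ c * ‖x n‖) : memLambda a y := by
  intro k
  refine squeeze_zero' (Eventually.of_forall fun n => by unfold wt; positivity) ?_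
    (by simpa using (hx k).const_mul c)
  filter_upwards [h] with n hn
  calc wt a k n * ‖y n‖ ≤ wt a k n * (c * ‖x n‖) := by
        gcongr
        exact (Real.exp_pos _).le
    _ = c * (wt a k n * ‖x n‖) := by ring

theorem memLambda_one (htop : Tendsto a atTop atTop) : memLambda a 1 := by
  intro k
  simpa using tendsto_wt_atTop htop k

theorem memLambda_mul {x y : ℕ → ℂ} (hx : memLambda a x) (hy : memLambda a y) :
    memLambda a (x * y) := by
  intro k
  simpa [wt_eq_sq k, norm_mul, mul_mul_mul_comm, sq] using (hx (2 * k + 1)).mul (hy (2 * k + 1))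

theorem memLambda_pow (htop : Tendsto a atTop atTop) {x : ℕ → ℂ} (hx : memLambda a x) (m : ℕ) :
    memLambda a (x ^ m) := by
  induction m with
  | zero => simpa using memLambda_one htop
  | succ m ih => simpa [pow_succ] using memLambda_mul ih hx

theorem wt_mul_natCast_add_one (k n : ℕ) :
    wt a k n * ((n : ℝ) + 1) = Real.exp (Real.log ((n : ℝ) + 1) - a n / ((k : ℝ) + 1)) := by
  rw [Real.exp_sub, Real.exp_log (by positivity), wt, neg_div, Real.exp_neg]
  ring

theorem memLambda_natCast_add_one_iff (htop : Tendsto a atTop atTop) :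
    memLambda a (fun n => (n : ℂ) + 1) ↔
      Tendsto (fun n : ℕ => Real.log ((n : ℝ) + 1) / a n) atTop (𝓝 0) := by
  have hnorm (n : ℕ) : ‖(n : ℂ) + 1‖ = (n : ℝ) + 1 := by norm_cast
  simp only [memLambda, hnorm, wt_mul_natCast_add_one]
  have hpos := htop.eventually_gt_atTop 0
  constructor
  · intro h
    refine tendsto_order.2 ⟨fun b hb => ?_, fun b hb => ?_⟩
    · filter_upwards [hpos] with n hn
      exact hb.trans_le (div_nonneg (Real.log_nonneg (by simp)) hn.le)
    · obtain ⟨k, hk⟩ := exists_nat_one_div_lt hb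
      filter_upwards [hpos, (h k).eventually_lt_const one_pos] with n hn hlt
      rw [Real.exp_lt_one_iff, sub_neg] at hlt
      calc Real.log ((n : ℝ) + 1) / a n < a n / ((k : ℝ) + 1) / a n := by gcongr
        _ = 1 / ((k : ℝ) + 1) := by field_simp
        _ < b := hk
  · intro h k
    refine squeeze_zero' (.of_forall fun n => (Real.exp_pos _).le) ?_
      (tendsto_wt_atTop htop (2 * k + 1))
    set ε : ℝ := 1 / (2 * ((k : ℝ) + 1)) with hε
    filter_upwards [hpos, h.eventually_lt_const (by positivity : 0 < ε)] with n hn hlt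
    rw [div_lt_iff₀ hn] at hlt
    have e1 : a n / ((k : ℝ) + 1) = 2 * (ε * a n) := by rw [hε]; field_simp
    have e2 : -a n / (((2 * k + 1 : ℕ) : ℝ) + 1) = -(ε * a n) := by
      rw [hε]; push_cast; field_simp; ring
    rw [wt, Real.exp_le_exp, e1, e2]
    linarith

end PowerSeriesSpace

section Eigenvalues

variable {a : ℕ → ℝ}

theorem isEigen_one_div_of_tendsto (htop : Tendsto a atTop atTop)
    (ha : Tendsto (fun n : ℕ => Real.log ((n : ℝ) + 1) / a n) atTop (𝓝 0)) (m : ℕ) :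
    IsEigen a (1 / ((m : ℂ) + 1)) := by
  have hpow := memLambda_pow htop ((memLambda_natCast_add_one_iff htop).2 ha) m
  refine ⟨binomSeq m, memLambda_of_norm_le hpow 1 (.of_forall fun n => ?_), binomSeq_ne_zero m,
    cesaro_binomSeq m⟩
  have hle : n.choose m ≤ (n + 1) ^ m := (Nat.choose_le_pow n m).trans (by gcongr; omega)
  rw [one_mul, Pi.pow_apply, norm_pow, binomSeq, Complex.norm_natCast]
  exact_mod_cast hle

theorem tendsto_of_isEigen_ne_one (htop : Tendsto a atTop atTop) {lam : ℂ} (hlam : IsEigen a lam)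
    (hne : lam ≠ 1) : Tendsto (fun n : ℕ => Real.log ((n : ℝ) + 1) / a n) atTop (𝓝 0) := by
  obtain ⟨x, hmem, hx0, hx⟩ := hlam
  obtain ⟨m, rfl⟩ := exists_eq_one_div_of_cesaro_eq_smul hx hx0
  have hm : 1 ≤ m := Nat.one_le_iff_ne_zero.2 fun h => hne (by simp [h])
  have hxn (n : ℕ) : x n = x m * (n.choose m : ℂ) := by
    simpa [binomSeq] using congrFun (eq_smul_binomSeq_of_cesaro_eq_smul hx) n
  have hxm : x m ≠ 0 := fun h => hx0 (funext fun n => by simp [hxn n, h])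
  rw [← memLambda_natCast_add_one_iff htop]
  refine memLambda_of_norm_le hmem (2 / ‖x m‖) ?_
  filter_upwards [eventually_ge_atTop (2 * m)] with n hn
  have hle : n + 1 ≤ 2 * n.choose m := by
    have := Nat.sub_add_one_le_choose hm (by omega : m ≤ n)
    omega
  rw [hxn n, norm_mul, Complex.norm_natCast, ← mul_assoc, div_mul_cancel₀ _ (norm_ne_zero_iff.2 hxm)]
  exact_mod_cast hle

end Eigenvalues

theorem stmt5_general (a : ℕ → ℝ) (htop : Tendsto a atTop atTop) :
    [ Tendsto (fun n : ℕ => Real.log ((n : ℝ) + 1) / a n) atTop (𝓝 0),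
      {lam : ℂ | IsEigen a lam} = {lam : ℂ | ∃ m : ℕ, lam = 1 / ((m : ℂ) + 1)},
      ∃ lam : ℂ, IsEigen a lam ∧ lam ≠ 1 ].TFAE := by
  tfae_have 1 → 2 := fun ha => Set.ext fun lam =>
    ⟨fun ⟨_, _, hx0, hx⟩ => exists_eq_one_div_of_cesaro_eq_smul hx hx0,
      fun ⟨m, hm⟩ => hm ▸ isEigen_one_div_of_tendsto htop ha m⟩
  tfae_have 2 → 3 := fun hb => ⟨1 / 2, (Set.ext_iff.1 hb _).2 ⟨1, by norm_num⟩, by norm_num⟩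
  tfae_have 3 → 1 := fun ⟨_, hlam, hne⟩ => tendsto_of_isEigen_ne_one htop hlam hne
  tfae_finish

/-- the following are equivalent: (a) `(log n)/α_n → 0` (nuclearity of
`Λ₀(α)`); (b) the set of eigenvalues of `C` on `Λ₀(α)` equals `Σ = {1/m : m ≥ 1}`;
(c) `C` has an eigenvalue on `Λ₀(α)` different from `1`. -/
theorem stmt5 (a : ℕ → ℝ) (hmono : StrictMono a) (h1 : ∀ n, 1 < a n)
    (htop : Tendsto a atTop atTop) :
    [ Tendsto (fun n : ℕ => Real.log ((n : ℝ) + 1) / a n) atTop (𝓝 0),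
      {lam : ℂ | IsEigen a lam} = {lam : ℂ | ∃ m : ℕ, lam = 1 / ((m : ℂ) + 1)},
      ∃ lam : ℂ, IsEigen a lam ∧ lam ≠ 1 ].TFAE :=
  stmt5_general a htop
end
end

section
/- Let α be strictly increasing with α_n > 1 and α_n → ∞. The following assertions are equivalent: (a) the differentiation operator D, defined by (Dx)_n := n·x_{n+1}, maps Λ₀(α) into itself and is continuous; (b) for each k ≥ 1 there exist l > k and M > 0 such that n·e^{-α_n/k} ≤ M·e^{-α_{n+1}/l} for all n ≥ 1; (c) lim_{n→∞} (log n)/α_n = 0 and limsup_{n→∞} α_{n+1}/α_n < ∞. -/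
open Filter Finset Topology

noncomputable section

/-- The differentiation operator `D(x_1,x_2,x_3,…) = (x_2, 2x_3, 3x_4,…)` (0-indexed). -/
def diffOp (x : ℕ → ℂ) : ℕ → ℂ := fun n => ((n : ℂ) + 1) * x (n + 1)

/-!
Taking logarithms, the weight inequality in (b) reads
`log (n+1) + α_{n+1}/l ≤ log M + α_n/k`. With `k = 1` it bounds `α_{n+1}` linearly by `α_n`,
and letting `k → ∞` it forces `log n = o(α_n)`; conversely, under (c) both `log (n+1)` and
`α_{n+1}/l` (for `l` a large multiple of `k`) are eventually at most `α_n/(2k)`.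
The inequality dominates `D` termwise, which gives (a); testing (a) on unit vectors gives it back.
-/

lemma exists_pos_forall_le_mul_of_eventually_le {f g : ℕ → ℝ} (hg : ∀ n, 0 < g n)
    (h : ∀ᶠ n in atTop, f n ≤ g n) : ∃ M, 0 < M ∧ ∀ n, f n ≤ M * g n := by
  have hratio : ∀ᶠ n in atTop, f n / g n ≤ 1 := by
    filter_upwards [h] with n hn
    exact (div_le_one (hg n)).2 hn
  obtain ⟨B, hB⟩ := (isBoundedUnder_of_eventually_le hratio).bddAbove_range
  refine ⟨max B 1, by positivity, fun n => ?_⟩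
  rw [← div_le_iff₀ (hg n)]
  exact (hB ⟨n, rfl⟩).trans (le_max_left _ _)

section Weights

variable {a : ℕ → ℝ}

lemma wt_pos (a : ℕ → ℝ) (k n : ℕ) : 0 < wt a k n := Real.exp_pos _

lemma wt_le_wt {k l n : ℕ} (ha : 0 ≤ a n) (hkl : k ≤ l) : wt a k n ≤ wt a l n := by
  rw [wt, wt, Real.exp_le_exp, neg_div, neg_div, neg_le_neg_iff]
  gcongr

lemma succ_mul_wt_le_iff {k l n : ℕ} {M : ℝ} (hM : 0 < M) :
    ((n : ℝ) + 1) * wt a k n ≤ M * wt a l (n + 1) ↔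
      Real.log ((n : ℝ) + 1) + a (n + 1) / ((l : ℝ) + 1) ≤ Real.log M + a n / ((k : ℝ) + 1) := by
  have hn : (0 : ℝ) < (n : ℝ) + 1 := by positivity
  rw [wt, wt, ← Real.exp_log hn, ← Real.exp_log hM, ← Real.exp_add, ← Real.exp_add,
    Real.exp_le_exp, Real.log_exp, Real.log_exp, neg_div, neg_div]
  constructor <;> intro h <;> linarith

end Weights

section Sequences

variable {a : ℕ → ℝ} {x : ℕ → ℂ}

lemma memLambda_single (a : ℕ → ℝ) (m : ℕ) (c : ℂ) : memLambda a (Pi.single m c) := by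
  intro k
  refine tendsto_const_nhds.congr' ?_
  filter_upwards [eventually_gt_atTop m] with n hn
  simp [hn.ne']

lemma pk_single (a : ℕ → ℝ) (k m : ℕ) (c : ℂ) :
    pk a k (Pi.single m c) = wt a k m * ‖c‖ := by
  have hle : ∀ n, wt a k n * ‖(Pi.single m c : ℕ → ℂ) n‖ ≤ wt a k m * ‖c‖ := by
    intro n
    rcases eq_or_ne n m with rfl | hnm
    · simp
    · simp only [Pi.single_apply, hnm, if_false, norm_zero, mul_zero]
      exact mul_nonneg (wt_pos a k m).le (norm_nonneg c)
  refine le_antisymm (ciSup_le hle) ((le_ciSup ⟨_, Set.forall_mem_range.2 hle⟩ m).trans_eq' ?_)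
  simp

lemma wt_mul_norm_le_pk (hx : memLambda a x) (k n : ℕ) : wt a k n * ‖x n‖ ≤ pk a k x :=
  le_ciSup (hx k).bddAbove_range n

lemma norm_natCast_add_one (n : ℕ) : ‖(n : ℂ) + 1‖ = (n : ℝ) + 1 := by
  exact_mod_cast Complex.norm_natCast (n + 1)

lemma norm_diffOp (x : ℕ → ℂ) (n : ℕ) : ‖diffOp x n‖ = ((n : ℝ) + 1) * ‖x (n + 1)‖ := by
  rw [diffOp, norm_mul, norm_natCast_add_one]

lemma diffOp_single (m : ℕ) (c : ℂ) :
    diffOp (Pi.single (m + 1) c) = Pi.single m (((m : ℂ) + 1) * c) := by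
  ext n
  rcases eq_or_ne n m with rfl | hnm
  · simp [diffOp]
  · simp [diffOp, hnm]

section Bound

variable {k l : ℕ} {M : ℝ}

lemma wt_mul_norm_diffOp_le (h : ∀ n : ℕ, ((n : ℝ) + 1) * wt a k n ≤ M * wt a l (n + 1))
    (x : ℕ → ℂ) (n : ℕ) : wt a k n * ‖diffOp x n‖ ≤ M * (wt a l (n + 1) * ‖x (n + 1)‖) := by
  rw [norm_diffOp, mul_left_comm, ← mul_assoc, ← mul_assoc]
  exact mul_le_mul_of_nonneg_right (h n) (norm_nonneg _)

lemma pk_diffOp_le (hM : 0 ≤ M) (h : ∀ n : ℕ, ((n : ℝ) + 1) * wt a k n ≤ M * wt a l (n + 1))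
    (hx : memLambda a x) : pk a k (diffOp x) ≤ M * pk a l x :=
  ciSup_le fun n => (wt_mul_norm_diffOp_le h x n).trans
    (mul_le_mul_of_nonneg_left (wt_mul_norm_le_pk hx l (n + 1)) hM)

lemma succ_mul_wt_le_of_pk_diffOp_le (h : ∀ x, memLambda a x → pk a k (diffOp x) ≤ M * pk a l x)
    (n : ℕ) : ((n : ℝ) + 1) * wt a k n ≤ M * wt a l (n + 1) := by
  have := h _ (memLambda_single a (n + 1) 1)
  rwa [diffOp_single, pk_single, pk_single, mul_one, norm_natCast_add_one, norm_one, mul_one,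
    mul_comm] at this

end Bound

lemma memLambda_diffOp
    (h : ∀ k : ℕ, ∃ l : ℕ, ∃ M : ℝ, ∀ n : ℕ, ((n : ℝ) + 1) * wt a k n ≤ M * wt a l (n + 1))
    (hx : memLambda a x) : memLambda a (diffOp x) := by
  intro k
  obtain ⟨l, M, hkl⟩ := h k
  have hlim : Tendsto (fun n => M * (wt a l (n + 1) * ‖x (n + 1)‖)) atTop (𝓝 0) := by
    simpa using ((hx l).comp (tendsto_add_atTop_nat 1)).const_mul M
  exact squeeze_zero (fun n => mul_nonneg (wt_pos a k n).le (norm_nonneg _))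
    (wt_mul_norm_diffOp_le hkl x) hlim

end Sequences

section Growth

variable {a : ℕ → ℝ}

lemma tendsto_log_div_of_succ_mul_wt_le (ha : ∀ n, 0 < a n) (htop : Tendsto a atTop atTop)
    (h : ∀ k : ℕ, ∃ l : ℕ, ∃ M : ℝ, 0 < M ∧ ∀ n : ℕ,
      ((n : ℝ) + 1) * wt a k n ≤ M * wt a l (n + 1)) :
    Tendsto (fun n : ℕ => Real.log ((n : ℝ) + 1) / a n) atTop (𝓝 0) := by
  refine tendsto_order.2 ⟨fun ε hε => Eventually.of_forall fun n => hε.trans_le ?_, fun ε hε => ?_⟩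
  · exact div_nonneg (Real.log_nonneg (by simp)) (ha n).le
  obtain ⟨k, hk⟩ := exists_nat_one_div_lt (half_pos hε)
  obtain ⟨l, M, hM, hkl⟩ := h k
  have hlogM : ∀ᶠ n in atTop, Real.log M / a n < ε / 2 :=
    (tendsto_const_nhds.div_atTop htop).eventually (gt_mem_nhds (half_pos hε))
  filter_upwards [hlogM] with n hn
  have hlog : Real.log ((n : ℝ) + 1) ≤ Real.log M + a n / ((k : ℝ) + 1) := by
    have hlogM := (succ_mul_wt_le_iff hM).1 (hkl n)
    have hshift : 0 < a (n + 1) / ((l : ℝ) + 1) := div_pos (ha (n + 1)) (by positivity)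
    linarith
  calc Real.log ((n : ℝ) + 1) / a n
      ≤ Real.log M / a n + 1 / ((k : ℝ) + 1) := by
        rwa [div_add' _ _ _ (ha n).ne', div_le_div_iff_of_pos_right (ha n), one_div_mul_eq_div]
    _ < ε := by linarith

lemma div_le_of_succ_mul_wt_le (ha : ∀ n, 1 ≤ a n) {l : ℕ} {M : ℝ} (hM : 0 < M)
    (h : ∀ n : ℕ, ((n : ℝ) + 1) * wt a 0 n ≤ M * wt a l (n + 1)) (n : ℕ) :
    a (n + 1) / a n ≤ ((l : ℝ) + 1) * (|Real.log M| + 1) := by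
  have hlog := (succ_mul_wt_le_iff hM).1 (h n)
  simp only [Nat.cast_zero, zero_add, div_one] at hlog
  have hlog_nonneg : 0 ≤ Real.log ((n : ℝ) + 1) := Real.log_nonneg (by simp)
  have hshift : a (n + 1) / ((l : ℝ) + 1) ≤ (|Real.log M| + 1) * a n :=
    calc a (n + 1) / ((l : ℝ) + 1) ≤ Real.log M + a n := by linarith
      _ ≤ |Real.log M| * a n + a n := by
        gcongr
        exact (le_abs_self _).trans (le_mul_of_one_le_right (abs_nonneg _) (ha n))
      _ = (|Real.log M| + 1) * a n := by ring
  rw [div_le_iff₀ (by positivity)] at hshift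
  rw [div_le_iff₀ (zero_lt_one.trans_le (ha n))]
  linarith

lemma exists_eventually_succ_mul_wt_le (ha : ∀ n, 0 < a n)
    (hlog : Tendsto (fun n : ℕ => Real.log ((n : ℝ) + 1) / a n) atTop (𝓝 0)) {C : ℝ}
    (hC : ∀ᶠ n in atTop, a (n + 1) / a n ≤ C) (k : ℕ) :
    ∃ l : ℕ, k < l ∧ ∀ᶠ n : ℕ in atTop, ((n : ℝ) + 1) * wt a k n ≤ wt a l (n + 1) := by
  set l := max (k + 1) ⌈2 * C * ((k : ℝ) + 1)⌉₊
  have hl : 2 * C * ((k : ℝ) + 1) ≤ (l : ℝ) + 1 :=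
    (Nat.le_ceil _).trans (by exact_mod_cast (le_max_right _ _).trans (Nat.le_succ l))
  have hk : (0 : ℝ) < 2 * ((k : ℝ) + 1) := by positivity
  refine ⟨l, lt_max_of_lt_left k.lt_succ_self, ?_⟩
  filter_upwards [hlog.eventually (ge_mem_nhds (one_div_pos.2 hk)), hC] with n hn hCn
  rw [← one_mul (wt a l (n + 1)), succ_mul_wt_le_iff one_pos, Real.log_one, zero_add]
  rw [div_le_iff₀ (ha n), one_div_mul_eq_div] at hn
  rw [div_le_iff₀ (ha n)] at hCn
  have hshift : a (n + 1) / ((l : ℝ) + 1) ≤ a n / (2 * ((k : ℝ) + 1)) := by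
    rw [div_le_div_iff₀ (by positivity) hk]
    nlinarith [ha n]
  calc Real.log ((n : ℝ) + 1) + a (n + 1) / ((l : ℝ) + 1)
      ≤ a n / (2 * ((k : ℝ) + 1)) + a n / (2 * ((k : ℝ) + 1)) := add_le_add hn hshift
    _ = a n / ((k : ℝ) + 1) := by field_simp; ring

end Growth

theorem stmt7_general (a : ℕ → ℝ) (h1 : ∀ n, 1 < a n)
    (htop : Tendsto a atTop atTop) :
    [ (∀ x, memLambda a x → memLambda a (diffOp x)) ∧
        (∀ k : ℕ, ∃ l : ℕ, ∃ M : ℝ, 0 < M ∧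
          ∀ x, memLambda a x → pk a k (diffOp x) ≤ M * pk a l x),
      ∀ k : ℕ, ∃ l : ℕ, k < l ∧ ∃ M : ℝ, 0 < M ∧ ∀ n : ℕ,
        ((n : ℝ) + 1) * wt a k n ≤ M * wt a l (n + 1),
      (Tendsto (fun n : ℕ => Real.log ((n : ℝ) + 1) / a n) atTop (𝓝 0)) ∧
        ∃ C : ℝ, ∀ᶠ n in atTop, a (n + 1) / a n ≤ C ].TFAE := by
  have ha : ∀ n, 0 < a n := fun n => one_pos.trans (h1 n)
  tfae_have 1 → 2 := fun ⟨_, hcont⟩ k => by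
    obtain ⟨l, M, hM, hkl⟩ := hcont k
    refine ⟨max l (k + 1), by omega, M, hM, fun n => ?_⟩
    exact (succ_mul_wt_le_of_pk_diffOp_le hkl n).trans
      (mul_le_mul_of_nonneg_left (wt_le_wt (ha _).le (le_max_left _ _)) hM.le)
  tfae_have 2 → 1 := fun h =>
    ⟨fun _ => memLambda_diffOp fun k => (h k).imp fun _ ⟨_, M, _, hkl⟩ => ⟨M, hkl⟩,
      fun k => (h k).imp fun _ ⟨_, M, hM, hkl⟩ => ⟨M, hM, fun _ => pk_diffOp_le hM.le hkl⟩⟩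
  tfae_have 2 → 3 := fun h => by
    refine ⟨tendsto_log_div_of_succ_mul_wt_le ha htop fun k => (h k).imp fun _ => And.right, ?_⟩
    obtain ⟨l, -, M, hM, h0⟩ := h 0
    exact ⟨_, Eventually.of_forall (div_le_of_succ_mul_wt_le (fun n => (h1 n).le) hM h0)⟩
  tfae_have 3 → 2 := fun ⟨hlog, C, hC⟩ k => by
    obtain ⟨l, hkl, hev⟩ := exists_eventually_succ_mul_wt_le ha hlog hC k
    obtain ⟨M, hM, hbound⟩ :=
      exists_pos_forall_le_mul_of_eventually_le (fun n => wt_pos a l (n + 1)) hev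
    exact ⟨l, hkl, M, hM, hbound⟩
  tfae_finish

/-- the following are equivalent: (a) the differentiation operator `D`
maps `Λ₀(α)` into itself and is continuous; (b) for each `k` there are `l > k` and
`M > 0` with `n e^{-α_n/k} ≤ M e^{-α_{n+1}/l}` for all `n`; (c) `(log n)/α_n → 0`
(nuclearity) and `limsup α_{n+1}/α_n < ∞` (shift stability). -/
theorem stmt7 (a : ℕ → ℝ) (hmono : StrictMono a) (h1 : ∀ n, 1 < a n)
    (htop : Tendsto a atTop atTop) :
    [ (∀ x, memLambda a x → memLambda a (diffOp x)) ∧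
        (∀ k : ℕ, ∃ l : ℕ, ∃ M : ℝ, 0 < M ∧
          ∀ x, memLambda a x → pk a k (diffOp x) ≤ M * pk a l x),
      ∀ k : ℕ, ∃ l : ℕ, k < l ∧ ∃ M : ℝ, 0 < M ∧ ∀ n : ℕ,
        ((n : ℝ) + 1) * wt a k n ≤ M * wt a l (n + 1),
      (Tendsto (fun n : ℕ => Real.log ((n : ℝ) + 1) / a n) atTop (𝓝 0)) ∧
        ∃ C : ℝ, ∀ᶠ n in atTop, a (n + 1) / a n ≤ C ].TFAE :=
  stmt7_general a h1 htop
end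
end

section
/- Let α be strictly increasing with α_n > 1 and α_n → ∞, and suppose S_1(α) := {s ∈ ℝ : Σ_{n=1}^∞ e^{α_n}/n^s < ∞} is non-empty. Then (log n)/α_n does not tend to 0 as n → ∞ (so Λ₀(α) is not nuclear), and inf_{k≥1} s₀(k) = 1, where s₀(k) := inf S_k(α) and S_k(α) := {s ∈ ℝ : Σ_{n=1}^∞ e^{α_n/k}/n^s < ∞}. -/
/-!
Summability of `e^{α_n} / n^s` bounds its terms, i.e. `α_n ≤ c + s log n`. This single estimate
contradicts `log n = o(α_n)`, and after division by `k` it makes `e^{α_n/k} / n^x` summable for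
every `x > 1 + s/k`, so `s₀(k) ≤ 1 + s/k → 1`. Conversely, since `α_n ≥ 0` these sums dominate
the `p`-series `∑ n^{-x}`, forcing `s₀(k) ≥ 1`.
-/

open Filter Topology

noncomputable section

/-- `S_k(α) = {s ∈ ℝ : ∑ₙ e^{α_n/k} / n^s < ∞}` (again `k : Nat` represents `k+1`). -/
def Sk (a : ℕ → ℝ) (k : ℕ) : Set ℝ :=
  {s : ℝ | Summable fun n : ℕ => Real.exp (a n / ((k : ℝ) + 1)) / ((n : ℝ) + 1) ^ s}

open Real Set

theorem Real.summable_nat_add_one_rpow_iff {t : ℝ} :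
    Summable (fun n : ℕ => ((n : ℝ) + 1) ^ t) ↔ t < -1 := by
  have h := summable_nat_add_iff (f := fun n : ℕ => (n : ℝ) ^ t) 1
  push_cast at h
  rw [h, summable_nat_rpow]

theorem Real.exp_div_nat_add_one_rpow (y s : ℝ) (n : ℕ) :
    exp y / ((n : ℝ) + 1) ^ s = exp (y - s * log ((n : ℝ) + 1)) := by
  rw [rpow_def_of_pos (by positivity), exp_sub, mul_comm]

section LogGrowth

variable {b : ℕ → ℝ}

theorem exists_le_add_mul_log_of_summable {s : ℝ}
    (hb : Summable fun n : ℕ => exp (b n) / ((n : ℝ) + 1) ^ s) :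
    ∃ c, ∀ n, b n ≤ c + s * log ((n : ℝ) + 1) := by
  refine ⟨log (∑' m, exp (b m) / ((m : ℝ) + 1) ^ s), fun n => ?_⟩
  have hle : exp (b n) / ((n : ℝ) + 1) ^ s ≤ ∑' m, exp (b m) / ((m : ℝ) + 1) ^ s :=
    hb.le_tsum n fun m _ => by positivity
  rw [exp_div_nat_add_one_rpow] at hle
  linarith [(le_log_iff_exp_le ((exp_pos _).trans_le hle)).mpr hle]

theorem summable_exp_div_rpow_of_le_add_mul_log {c r x : ℝ}
    (hb : ∀ n, b n ≤ c + r * log ((n : ℝ) + 1)) (hx : 1 + r < x) :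
    Summable fun n : ℕ => exp (b n) / ((n : ℝ) + 1) ^ x := by
  have hdom : Summable fun n : ℕ => exp c * ((n : ℝ) + 1) ^ (r - x) :=
    (summable_nat_add_one_rpow_iff.mpr (by linarith)).mul_left _
  refine hdom.of_nonneg_of_le (fun n => by positivity) fun n => ?_
  rw [exp_div_nat_add_one_rpow, rpow_def_of_pos (by positivity), ← exp_add]
  gcongr
  linarith [hb n]

theorem one_lt_of_summable_exp_div_rpow {x : ℝ} (hb : ∀ n, 0 ≤ b n)
    (hsum : Summable fun n : ℕ => exp (b n) / ((n : ℝ) + 1) ^ x) : 1 < x := by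
  have : Summable fun n : ℕ => ((n : ℝ) + 1) ^ (-x) := by
    refine hsum.of_nonneg_of_le (fun n => by positivity) fun n => ?_
    rw [rpow_neg (by positivity), inv_eq_one_div]
    gcongr
    exact one_le_exp (hb n)
  linarith [summable_nat_add_one_rpow_iff.mp this]

theorem not_tendsto_log_div_of_le_add_mul_log {c s : ℝ} (hb : Tendsto b atTop atTop)
    (hgrowth : ∀ n, b n ≤ c + s * log ((n : ℝ) + 1)) :
    ¬ Tendsto (fun n : ℕ => log ((n : ℝ) + 1) / b n) atTop (𝓝 0) := by
  intro hlog
  have hlim : Tendsto (fun n => c / b n + s * (log ((n : ℝ) + 1) / b n)) atTop (𝓝 0) := by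
    simpa using (hb.const_div_atTop c).add (hlog.const_mul s)
  have hone : ∀ᶠ n in atTop, 1 ≤ c / b n + s * (log ((n : ℝ) + 1) / b n) := by
    filter_upwards [hb.eventually_gt_atTop 0] with n hpos
    rw [mul_div_assoc', ← add_div, le_div_iff₀ hpos, one_mul]
    exact hgrowth n
  linarith [ge_of_tendsto hlim hone]

end LogGrowth

section Sk

variable {a : ℕ → ℝ}

theorem Ioi_subset_Sk {c s : ℝ} (ha : ∀ n, a n ≤ c + s * log ((n : ℝ) + 1)) (k : ℕ) :
    Ioi (1 + s / ((k : ℝ) + 1)) ⊆ Sk a k := by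
  have hak (n : ℕ) :
      a n / ((k : ℝ) + 1) ≤ c / ((k : ℝ) + 1) + s / ((k : ℝ) + 1) * log ((n : ℝ) + 1) := by
    rw [div_mul_eq_mul_div, ← add_div]
    gcongr
    exact ha n
  exact fun x hx => summable_exp_div_rpow_of_le_add_mul_log hak hx

theorem Sk_subset_Ioi (ha : ∀ n, 0 ≤ a n) (k : ℕ) : Sk a k ⊆ Ioi 1 := fun _ hx =>
  one_lt_of_summable_exp_div_rpow (fun n => by have := ha n; positivity) hx

end Sk

theorem stmt12_general (a : ℕ → ℝ) (h1 : ∀ n, 1 < a n)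
    (htop : Tendsto a atTop atTop) (hS : (Sk a 0).Nonempty) :
    ¬ Tendsto (fun n : ℕ => Real.log ((n : ℝ) + 1) / a n) atTop (𝓝 0) ∧
    (⨅ k : ℕ, sInf (Sk a k)) = 1 := by
  obtain ⟨s, hs⟩ := hS
  obtain ⟨c, hc⟩ := exists_le_add_mul_log_of_summable (by simpa [Sk] using hs)
  have hSk_lower : ∀ k, Sk a k ⊆ Ioi 1 := Sk_subset_Ioi fun n => (one_pos.trans (h1 n)).le
  have hSk_upper (k : ℕ) : sInf (Sk a k) ≤ 1 + s / ((k : ℝ) + 1) := by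
    simpa using csInf_le_csInf ⟨1, fun x hx => (hSk_lower k hx).le⟩ nonempty_Ioi
      (Ioi_subset_Sk hc k)
  have hone_le (k : ℕ) : 1 ≤ sInf (Sk a k) :=
    le_csInf (nonempty_Ioi.mono (Ioi_subset_Sk hc k)) fun x hx => (hSk_lower k hx).le
  refine ⟨not_tendsto_log_div_of_le_add_mul_log htop hc, le_antisymm ?_ (le_ciInf hone_le)⟩
  have hlim : Tendsto (fun k : ℕ => 1 + s / ((k : ℝ) + 1)) atTop (𝓝 1) := by
    simpa [div_eq_mul_inv] using (tendsto_one_div_add_atTop_nhds_zero_nat.const_mul s).const_add 1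
  exact ge_of_tendsto' hlim fun k =>
    (ciInf_le ⟨1, by rintro _ ⟨j, rfl⟩; exact hone_le j⟩ k).trans (hSk_upper k)

/-- if `S_1(α) ≠ ∅` then `(log n)/α_n` does not tend to `0` (so
`Λ₀(α)` is not nuclear) and `inf_{k ≥ 1} s₀(k) = 1` where `s₀(k) = inf S_k(α)`.
(`Sk a 0` is `S_1(α)` because of the index shift.) -/
theorem stmt12 (a : ℕ → ℝ) (hmono : StrictMono a) (h1 : ∀ n, 1 < a n)
    (htop : Tendsto a atTop atTop) (hS : (Sk a 0).Nonempty) :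
    ¬ Tendsto (fun n : ℕ => Real.log ((n : ℝ) + 1) / a n) atTop (𝓝 0) ∧
    (⨅ k : ℕ, sInf (Sk a k)) = 1 :=
  stmt12_general a h1 htop hS
end
end

section
/- There exists a strictly increasing sequence α with α_n > 1 for all n and α_n → ∞ such that Σ_{n=1}^∞ e^{α_n}/n^t = ∞ for every t ∈ ℝ (i.e. S_1(α) = ∅), and yet (log n)/α_n does not tend to 0 as n → ∞ (so Λ₀(α) is not nuclear). -/
open Filter Topology

noncomputable section

/-! The sequence `α n = log (n + 1) + 2 ^ 2 ^ (K n + 1)`, with `K n = ⌊log₂ log₂ log₂ n⌋`, is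
constant apart from the slowly growing `log (n + 1)` on each block `K n = k`, i.e.
`2 ^ 2 ^ 2 ^ k ≤ n < 2 ^ 2 ^ 2 ^ (k + 1)`. Writing `L = 2 ^ 2 ^ k`, at the start of the
block `log n ≈ L log 2` while the step is `L ^ 2`, so `α n / log n` is unbounded and
`e ^ {α n} / n ^ t ≥ 1` infinitely often for every `t`. At the end of the block
`log n ≈ L ^ 2 log 2` has caught up with the step, so `log n / α n` stays above `log 2 / (log 2 + 1)` infinitely often. -/

def tripleLog (n : ℕ) : ℕ := Nat.log 2 (Nat.log 2 (Nat.log 2 n))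

def tower (k : ℕ) : ℕ := 2 ^ 2 ^ 2 ^ k

def towerSeq (n : ℕ) : ℝ := Real.log ((n : ℝ) + 1) + 2 ^ 2 ^ (tripleLog n + 1)

lemma tripleLog_monotone : Monotone tripleLog := fun _ _ h =>
  Nat.log_mono_right (Nat.log_mono_right (Nat.log_mono_right h))

lemma tripleLog_tower (k : ℕ) : tripleLog (tower k) = k := by
  simp only [tripleLog, tower, Nat.log_pow one_lt_two]

lemma tripleLog_le_of_lt_tower {n k : ℕ} (h : n < tower (k + 1)) : tripleLog n ≤ k :=
  Nat.lt_succ_iff.mp <| Nat.log_lt_of_lt_pow' (by positivity) <|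
    Nat.log_lt_of_lt_pow' (by positivity) <| Nat.log_lt_of_lt_pow' (by positivity) h

lemma tendsto_tower_atTop : Tendsto tower atTop atTop :=
  (StrictMono.tendsto_atTop fun _ _ h =>
    Nat.pow_lt_pow_right one_lt_two <| Nat.pow_lt_pow_right one_lt_two <|
      Nat.pow_lt_pow_right one_lt_two h)

lemma towerSeq_strictMono : StrictMono towerSeq := by
  intro m n hmn
  have hlog : Real.log ((m : ℝ) + 1) < Real.log ((n : ℝ) + 1) :=
    Real.log_lt_log (by positivity) (by gcongr)
  have hstep : (2 : ℝ) ^ 2 ^ (tripleLog m + 1) ≤ 2 ^ 2 ^ (tripleLog n + 1) :=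
    pow_le_pow_right₀ one_le_two <| Nat.pow_le_pow_right two_pos <|
      Nat.succ_le_succ (tripleLog_monotone hmn.le)
  exact add_lt_add_of_lt_of_le hlog hstep

lemma one_lt_towerSeq (n : ℕ) : 1 < towerSeq n := by
  have hlog : 0 ≤ Real.log ((n : ℝ) + 1) := Real.log_nonneg (by linarith [n.cast_nonneg (α := ℝ)])
  have hstep : (1 : ℝ) < 2 ^ 2 ^ (tripleLog n + 1) := one_lt_pow₀ one_lt_two (by positivity)
  exact lt_add_of_nonneg_of_lt hlog hstep

lemma tendsto_towerSeq_atTop : Tendsto towerSeq atTop atTop := by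
  have hlog : Tendsto (fun n : ℕ => Real.log ((n : ℝ) + 1)) atTop atTop :=
    Real.tendsto_log_atTop.comp (tendsto_atTop_add_const_right _ 1 tendsto_natCast_atTop_atTop)
  exact tendsto_atTop_mono (fun n => le_add_of_nonneg_right (by positivity)) hlog

lemma frequently_mul_log_le_towerSeq (t : ℝ) :
    ∃ᶠ n : ℕ in atTop, t * Real.log ((n : ℝ) + 1) ≤ towerSeq n := by
  refine tendsto_tower_atTop.frequently (Eventually.frequently ?_)
  have hN_tendsto : Tendsto (fun k : ℕ => ((2 ^ 2 ^ k : ℕ) : ℝ)) atTop atTop :=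
    tendsto_natCast_atTop_atTop.comp <| (tendsto_pow_atTop_atTop_of_one_lt one_lt_two).comp
      (tendsto_pow_atTop_atTop_of_one_lt one_lt_two)
  filter_upwards [hN_tendsto.eventually_ge_atTop (2 * |t|)] with k hk
  set N : ℕ := 2 ^ 2 ^ k with hN
  have hN1 : (1 : ℝ) ≤ N := by exact_mod_cast Nat.one_le_two_pow
  have hlog_le : Real.log ((tower k : ℝ) + 1) ≤ 2 * N := by
    calc Real.log ((tower k : ℝ) + 1) ≤ Real.log (2 ^ (N + 1)) := by
          refine Real.log_le_log (by positivity) ?_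
          have : (1 : ℝ) ≤ 2 ^ N := one_le_pow₀ one_le_two
          simp only [tower, ← hN, Nat.cast_pow, Nat.cast_ofNat, pow_succ]
          linarith
      _ = (N + 1) * Real.log 2 := by rw [Real.log_pow]; push_cast; ring
      _ ≤ 2 * N := by nlinarith [Real.log_two_lt_d9, Real.log_two_gt_d9]
  have hlog_nonneg : 0 ≤ Real.log ((tower k : ℝ) + 1) :=
    Real.log_nonneg (by linarith [(tower k).cast_nonneg (α := ℝ)])
  have hstep : (2 : ℝ) ^ 2 ^ (tripleLog (tower k) + 1) = (N : ℝ) ^ 2 := by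
    rw [tripleLog_tower, pow_succ, pow_mul, hN]; push_cast; ring
  rw [towerSeq, hstep]
  nlinarith [mul_nonneg (sub_nonneg.mpr (le_abs_self t)) hlog_nonneg,
    mul_nonneg (abs_nonneg t) (sub_nonneg.mpr hlog_le),
    mul_nonneg (by linarith : (0 : ℝ) ≤ N) (sub_nonneg.mpr hk)]

lemma frequently_one_third_le_log_div_towerSeq :
    ∃ᶠ n : ℕ in atTop, 1 / 3 ≤ Real.log ((n : ℝ) + 1) / towerSeq n := by
  have hblockEnd : Tendsto (fun k => tower (k + 1) - 1) atTop atTop :=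
    (tendsto_sub_atTop_nat 1).comp (tendsto_tower_atTop.comp (tendsto_add_atTop_nat 1))
  refine hblockEnd.frequently (Frequently.of_forall fun k => ?_)
  set M : ℕ := 2 ^ 2 ^ (k + 1) with hM
  have htower : tower (k + 1) = 2 ^ M := rfl
  have hpos : 0 < tower (k + 1) := Nat.two_pow_pos _
  have hlt : tower (k + 1) - 1 < tower (k + 1) := Nat.sub_one_lt hpos.ne'
  have hcast : (((tower (k + 1) - 1 : ℕ) : ℝ) + 1) = 2 ^ M := by
    rw [Nat.cast_sub hpos, htower]; push_cast; ring
  have hlog : Real.log (((tower (k + 1) - 1 : ℕ) : ℝ) + 1) = M * Real.log 2 := by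
    rw [hcast, Real.log_pow]
  have hstep : (2 : ℝ) ^ 2 ^ (tripleLog (tower (k + 1) - 1) + 1) ≤ M := by
    rw [hM]; push_cast
    exact pow_le_pow_right₀ one_le_two <| Nat.pow_le_pow_right two_pos <|
      Nat.succ_le_succ (tripleLog_le_of_lt_tower hlt)
  rw [le_div_iff₀ (zero_lt_one.trans (one_lt_towerSeq _)), towerSeq, hlog]
  nlinarith [Real.log_two_gt_d9]

lemma not_tendsto_zero_of_frequently_le {ι : Type*} {l : Filter ι} {f : ι → ℝ} {c : ℝ}
    (hc : 0 < c) (h : ∃ᶠ i in l, c ≤ f i) : ¬Tendsto f l (𝓝 0) := fun hf =>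
  let ⟨_, hle, hlt⟩ := (h.and_eventually (hf.eventually_lt_const hc)).exists
  hle.not_gt hlt

/-- there exists a strictly increasing sequence `α` with `α_n > 1` and
`α_n → ∞` such that `∑_n e^{α_n}/n^t = ∞` for every `t ∈ ℝ` (i.e. `S_1(α) = ∅`), and
yet `(log n)/α_n` does not tend to `0` (so `Λ₀(α)` is not nuclear). -/
theorem stmt13 :
    ∃ a : ℕ → ℝ, StrictMono a ∧ (∀ n, 1 < a n) ∧ Tendsto a atTop atTop ∧
      (∀ t : ℝ, ¬ Summable fun n : ℕ => Real.exp (a n) / ((n : ℝ) + 1) ^ t) ∧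
      ¬ Tendsto (fun n : ℕ => Real.log ((n : ℝ) + 1) / a n) atTop (𝓝 0) := by
  refine ⟨towerSeq, towerSeq_strictMono, one_lt_towerSeq, tendsto_towerSeq_atTop, fun t hs => ?_,
    not_tendsto_zero_of_frequently_le (by norm_num) frequently_one_third_le_log_div_towerSeq⟩
  refine not_tendsto_zero_of_frequently_le one_pos ?_ hs.tendsto_atTop_zero
  refine (frequently_mul_log_le_towerSeq t).mono fun n hn => ?_
  rw [Real.rpow_def_of_pos (by positivity), one_le_div (Real.exp_pos _), Real.exp_le_exp,
    mul_comm]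
  exact hn

end
end
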